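/- arXiv:2211.16722 — 4 statements merged into one kernel-verified Lean document; each statement's English description precedes it below -/
import Mathlib

section
/- Let p ∈ ℕ with p ≥ 1 and ε₀ ∈ (0,1) with b := 1−(1−ε₀)p ≥ 0. For t > 1 define I_p(t) := (1 − t^{1−p})/(p−1) if p ≥ 2 and I_1(t) := ln t if p = 1. Let A ∈ ℝ satisfy: A > 2/p in case b > 0, and A > (p−1)·2^p/((2^{p−1}−1)·p) in case b = 0. Then for every K ≥ 0 there exists δ₀ ∈ (0,1) such that for all δ ∈ (0,δ₀): 1 − (p/2)·A·δ^{−b}·I_p(1 + δ^{b}) + K·δ^{(1−ε₀)p} < 0. -/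
/-!
Write `b = 1 - (1 - ε₀) p`. Because `I_p(1) = 0` and `I_p'(1) = 1`, the quantity
`δ^{-b} I_p(1 + δ^b)` is a difference quotient of `I_p` at `1` and tends to `1` as `δ → 0⁺`
when `b > 0`; when `b = 0` it is the constant `I_p(2)`. Hence the whole expression tends to
`1 - (p/2) A c` with `c = 1` or `c = I_p(2)`, and the two largeness assumptions on `A` say
exactly that this limit is negative.
-/

open Filter Set Topology Real

/-- `integralInvPow p t = ∫ s in 1..t, s ^ (-p)`, the quantity `I_p(t)` of the paper. -/
noncomputable def integralInvPow (p : ℕ) (t : ℝ) : ℝ :=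
  if p = 1 then log t else (1 - t ^ ((1 : ℝ) - p)) / ((p : ℝ) - 1)

theorem integralInvPow_one_right (p : ℕ) : integralInvPow p 1 = 0 := by
  simp [integralInvPow]

theorem hasDerivAt_integralInvPow (p : ℕ) {t : ℝ} (ht : 0 < t) :
    HasDerivAt (integralInvPow p) (t ^ (-(p : ℝ))) t := by
  unfold integralInvPow
  split_ifs with hp
  · subst hp
    simpa [rpow_neg_one] using hasDerivAt_log ht.ne'
  · have hp' : (p : ℝ) - 1 ≠ 0 := sub_ne_zero.mpr (by exact_mod_cast hp)
    refine (((hasDerivAt_rpow_const (p := 1 - p) (Or.inl ht.ne')).const_sub 1).div_const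
      ((p : ℝ) - 1)).congr_deriv ?_
    rw [show (1 : ℝ) - p - 1 = -p by ring]
    field_simp
    ring

theorem tendsto_inv_mul_integralInvPow_one_add (p : ℕ) :
    Tendsto (fun x => x⁻¹ * integralInvPow p (1 + x)) (𝓝[≠] 0) (𝓝 1) := by
  simpa [integralInvPow_one_right] using (hasDerivAt_integralInvPow p one_pos).tendsto_slope_zero

theorem tendsto_rpow_nhdsGT_zero {r : ℝ} (hr : 0 < r) :
    Tendsto (fun x : ℝ => x ^ r) (𝓝[>] 0) (𝓝[>] 0) := by
  refine tendsto_nhdsWithin_iff.mpr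
    ⟨?_, eventually_nhdsWithin_of_forall fun x hx => rpow_pos_of_pos hx r⟩
  simpa [zero_rpow hr.ne'] using
    (continuousAt_rpow_const 0 r (Or.inr hr.le)).tendsto.mono_left nhdsWithin_le_nhds

theorem exists_Ioo_forall_of_eventually_nhdsGT {a b : ℝ} (hab : a < b) {P : ℝ → Prop}
    (h : ∀ᶠ x in 𝓝[>] a, P x) : ∃ c ∈ Ioo a b, ∀ x ∈ Ioo a c, P x := by
  obtain ⟨c, ⟨hac, hc⟩, hsub⟩ :=
    (mem_nhdsGT_iff_exists_mem_Ioc_Ioo_subset (u' := (a + b) / 2) (by linarith)).mp h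
  exact ⟨c, ⟨hac, by linarith⟩, hsub⟩

theorem integralInvPow_two {p : ℕ} (hp : 2 ≤ p) :
    integralInvPow p 2 = (2 ^ (p - 1) - 1) / (2 ^ (p - 1) * ((p : ℝ) - 1)) := by
  have hexp : (1 : ℝ) - p = -((p - 1 : ℕ) : ℝ) := by
    push_cast [Nat.cast_sub (by omega : 1 ≤ p)]
    ring
  have hp1 : (p : ℝ) - 1 ≠ 0 := sub_ne_zero.mpr (by exact_mod_cast (by omega : p ≠ 1))
  rw [integralInvPow, if_neg (by omega), hexp, rpow_neg zero_le_two, rpow_natCast]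
  field_simp

theorem one_lt_mul_integralInvPow_two {p : ℕ} (hp : 2 ≤ p) {A : ℝ}
    (hA : ((p : ℝ) - 1) * 2 ^ p / ((2 ^ (p - 1) - 1) * p) < A) :
    1 < p / 2 * A * integralInvPow p 2 := by
  have hpR : (2 : ℝ) ≤ p := by exact_mod_cast hp
  have hq : (2 : ℝ) ≤ 2 ^ (p - 1) := le_self_pow₀ one_le_two (by omega)
  have h2p : (2 : ℝ) ^ p = 2 * 2 ^ (p - 1) := by rw [← pow_succ']; congr 1; omega
  rw [h2p, div_lt_iff₀ (by nlinarith)] at hA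
  rw [integralInvPow_two hp, ← mul_div_assoc,
    one_lt_div (mul_pos (by positivity) (by linarith))]
  nlinarith

/-- The mechanism of shock formation (Section 8.2 with Proposition 3.3):
under the largeness assumption on A, the quantity
1 − (p/2)·A·δ^{−b}·I_p(1+δ^b) + K·δ^{(1−ε₀)p}  (b = 1−(1−ε₀)p)
is negative for all sufficiently small δ > 0, where I_p(t) = (1−t^{1−p})/(p−1)
for p ≥ 2 and I₁(t) = ln t. -/
theorem shock_formation_mechanism
    (p : ℕ) (hp : 1 ≤ p) (ε₀ : ℝ) (hε : ε₀ ∈ Set.Ioo (0 : ℝ) 1)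
    (hb : 0 ≤ 1 - (1 - ε₀) * p) (A : ℝ)
    (hA1 : 0 < 1 - (1 - ε₀) * p → A > 2 / (p : ℝ))
    (hA2 : 1 - (1 - ε₀) * p = 0 →
      A > ((p : ℝ) - 1) * 2 ^ p / ((2 ^ (p - 1) - 1) * (p : ℝ))) :
    ∀ K : ℝ, 0 ≤ K → ∃ δ₀ ∈ Set.Ioo (0 : ℝ) 1, ∀ δ ∈ Set.Ioo (0 : ℝ) δ₀,
      1 - ((p : ℝ) / 2) * A * δ ^ (-(1 - (1 - ε₀) * p)) *
          (if p = 1 then Real.log (1 + δ ^ (1 - (1 - ε₀) * p))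
           else (1 - (1 + δ ^ (1 - (1 - ε₀) * p)) ^ ((1 : ℝ) - (p : ℝ))) / ((p : ℝ) - 1))
        + K * δ ^ ((1 - ε₀) * p) < 0 := by
  intro K _
  obtain ⟨hε0, hε1⟩ := hε
  have hp0 : (0 : ℝ) < p := by exact_mod_cast hp
  set b := 1 - (1 - ε₀) * (p : ℝ)
  obtain ⟨c, hc, hAc⟩ : ∃ c,
      Tendsto (fun δ : ℝ => δ ^ (-b) * integralInvPow p (1 + δ ^ b)) (𝓝[>] 0) (𝓝 c) ∧
        1 < p / 2 * A * c := by
    rcases hb.eq_or_lt with hb0 | hbpos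
    · have hp2 : 2 ≤ p := Nat.one_lt_cast (α := ℝ) |>.mp (by linarith [mul_pos hε0 hp0])
      refine ⟨integralInvPow p 2, ?_, one_lt_mul_integralInvPow_two hp2 (hA2 hb0.symm)⟩
      simp only [← hb0, neg_zero, rpow_zero, one_mul, one_add_one_eq_two]
      exact tendsto_const_nhds
    · refine ⟨1, ?_, by linarith [(div_lt_iff₀ hp0).mp (hA1 hbpos)]⟩
      refine ((tendsto_inv_mul_integralInvPow_one_add p).comp
        ((tendsto_rpow_nhdsGT_zero hbpos).mono_right (nhdsGT_le_nhdsNE 0))).congr' ?_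
      filter_upwards [self_mem_nhdsWithin] with δ hδ
      simp [rpow_neg (le_of_lt hδ)]
  have hlim := ((hc.const_mul (p / 2 * A)).const_sub 1).add
    (((tendsto_rpow_nhdsGT_zero (mul_pos (sub_pos.mpr hε1) hp0)).mono_right
      nhdsWithin_le_nhds).const_mul K)
  refine exists_Ioo_forall_of_eventually_nhdsGT one_pos
    ((hlim.eventually_lt_const (by linarith : 1 - p / 2 * A * c + K * 0 < 0)).mono fun δ hδ => ?_)
  simpa only [mul_assoc, integralInvPow] using hδ
end

section
/- With the acoustic geometry setup and Levi-Civita connection D below, for all smooth vector fields X, Y on U satisfying X⁰ = Y⁰ = 0 and Xu = Yu = 0 (i.e. tangent to the spheres S_{t,u}) the following hold on U: (i) g(D_X L̄, Y) = −c^{−2}μ · g(D_X L, Y); (ii) g(D_X T̂, Y) = −c^{−1} · g(D_X L, Y); (iii) g(D_X L, T) = −c^{−1}μ · Xc; (iv) −g(D_X T, L) = c · X(c^{−1}μ). -/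
noncomputable section

open scoped BigOperators

/-- Points of ℝ⁴ with coordinates (x⁰,x¹,x²,x³) = (t,x¹,x²,x³). -/
abbrev Pt : Type := Fin 4 → ℝ

/-- Partial derivative ∂_α f. -/
def pd (f : Pt → ℝ) (α : Fin 4) (x : Pt) : ℝ :=
  fderiv ℝ f x (Pi.single α 1)

/-- The acoustic metric g = diag(−c², 1, 1, 1). -/
def gMat (c : Pt → ℝ) (α β : Fin 4) (x : Pt) : ℝ :=
  if α = β then (if α = 0 then -(c x) ^ 2 else 1) else 0

/-- The inverse metric g⁻¹ = diag(−c⁻², 1, 1, 1). -/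
def gInv (c : Pt → ℝ) (α β : Fin 4) (x : Pt) : ℝ :=
  if α = β then (if α = 0 then -((c x) ^ 2)⁻¹ else 1) else 0

/-- Vf = V^α ∂_α f. -/
def vApp (V : Pt → Fin 4 → ℝ) (f : Pt → ℝ) (x : Pt) : ℝ :=
  ∑ α, V x α * pd f α x

/-- g(V, W) = g_{αβ} V^α W^β. -/
def gPair (c : Pt → ℝ) (V W : Pt → Fin 4 → ℝ) (x : Pt) : ℝ :=
  ∑ α, ∑ β, gMat c α β x * V x α * W x β

/-- L̂^α = −g^{αβ}∂_β u. -/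
def Lhat (c u : Pt → ℝ) (x : Pt) (α : Fin 4) : ℝ :=
  -∑ β, gInv c α β x * pd u β x

/-- The inverse foliation density μ = 1/(c⁻²∂_t u). -/
def invDens (c u : Pt → ℝ) (x : Pt) : ℝ :=
  (((c x) ^ 2)⁻¹ * pd u 0 x)⁻¹

/-- L = μ L̂  (so L⁰ = 1). -/
def Lvec (c u : Pt → ℝ) (x : Pt) (α : Fin 4) : ℝ :=
  invDens c u x * Lhat c u x α

/-- T̂ = c⁻¹(∂_t − L). -/
def That (c u : Pt → ℝ) (x : Pt) (α : Fin 4) : ℝ :=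
  (c x)⁻¹ * ((if α = 0 then 1 else 0) - Lvec c u x α)

/-- T = c⁻¹ μ T̂. -/
def Tvec (c u : Pt → ℝ) (x : Pt) (α : Fin 4) : ℝ :=
  (c x)⁻¹ * invDens c u x * That c u x α

/-- L̄ = c⁻²μ L + 2T. -/
def Lbar (c u : Pt → ℝ) (x : Pt) (α : Fin 4) : ℝ :=
  ((c x) ^ 2)⁻¹ * invDens c u x * Lvec c u x α + 2 * Tvec c u x α

/-- The induced inverse metric ĝ^{αβ} = g^{αβ} + (2μ)⁻¹(L^αL̄^β + L̄^αL^β). -/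
def ghat (c u : Pt → ℝ) (α β : Fin 4) (x : Pt) : ℝ :=
  gInv c α β x + (2 * invDens c u x)⁻¹ *
    (Lvec c u x α * Lbar c u x β + Lbar c u x α * Lvec c u x β)

/-- The Christoffel symbols Γ_{αβγ} = ½(∂_α g_{βγ} + ∂_γ g_{αβ} − ∂_β g_{αγ}). -/
def Gamlow (c : Pt → ℝ) (α β γ : Fin 4) (x : Pt) : ℝ :=
  (1 / 2) * (pd (fun y => gMat c β γ y) α x + pd (fun y => gMat c α β y) γ x
    - pd (fun y => gMat c α γ y) β x)

/-- Γ^γ_{αβ} = g^{γλ} Γ_{αλβ}. -/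
def Gam (c : Pt → ℝ) (γ α β : Fin 4) (x : Pt) : ℝ :=
  ∑ l, gInv c γ l x * Gamlow c α l β x

/-- The Levi-Civita covariant derivative: (D_X V)^γ = X^α(∂_α V^γ + Γ^γ_{αβ}V^β). -/
def covD (c : Pt → ℝ) (X V : Pt → Fin 4 → ℝ) (x : Pt) (γ : Fin 4) : ℝ :=
  ∑ α, X x α * (pd (fun y => V y γ) α x + ∑ β, Gam c γ α β x * V x β)


/-!
Since only `g₀₀ = -c²` is non-constant, `Γ^γ_{αβ}` vanishes for spatial `α` unless `γ = β = 0`;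
so along a field `X` tangent to `S_{t,u}` the covariant derivative `D_X V` has the flat spatial
components `X(Vʲ)`. Spatially `T̂`, `T`, `L̄` are multiples of `L`: `T̂ʲ = -c⁻¹Lʲ` and
`Tʲ = L̄ʲ = -c⁻²μLʲ`. By the Leibniz rule this gives (i) and (ii), the extra term vanishing because
`L` is orthogonal to `S_{t,u}`. Since `L⁰ = 1` and `T⁰ = 0`, the eikonal equation reads
`Σⱼ (Lʲ)² = c²`; differentiating it along `X` gives `Σⱼ X(Lʲ) Lʲ = c Xc`, hence (iii) and (iv).
-/

open Filter Topology

section DirectionalDerivative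

variable {V : Pt → Fin 4 → ℝ} {f g : Pt → ℝ} {x : Pt}

lemma vApp_eq_fderiv (V : Pt → Fin 4 → ℝ) (f : Pt → ℝ) (x : Pt) :
    vApp V f x = fderiv ℝ f x (V x) := by
  conv_rhs => rw [← Finset.univ_sum_single (V x)]
  simp only [vApp, pd, map_sum]
  refine Finset.sum_congr rfl fun α _ => ?_
  rw [← smul_eq_mul, ← map_smul, ← Pi.single_smul, smul_eq_mul, mul_one]

lemma vApp_congr (h : f =ᶠ[𝓝 x] g) : vApp V f x = vApp V g x := by
  rw [vApp_eq_fderiv, vApp_eq_fderiv, h.fderiv_eq]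

lemma vApp_const (a : ℝ) : vApp V (fun _ => a) x = 0 := by
  simp [vApp_eq_fderiv]

lemma vApp_neg : vApp V (fun y => -f y) x = -vApp V f x := by
  simp [vApp_eq_fderiv, fderiv_fun_neg]

lemma vApp_mul (hf : DifferentiableAt ℝ f x) (hg : DifferentiableAt ℝ g x) :
    vApp V (fun y => f y * g y) x = vApp V f x * g x + f x * vApp V g x := by
  simp only [vApp_eq_fderiv, fderiv_fun_mul hf hg, add_apply, smul_apply, smul_eq_mul]
  ring

lemma vApp_inv (hf : DifferentiableAt ℝ f x) (h0 : f x ≠ 0) :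
    vApp V (fun y => (f y)⁻¹) x = -vApp V f x / f x ^ 2 := by
  rw [vApp_eq_fderiv, vApp_eq_fderiv, show (fun y => (f y)⁻¹) = (fun t : ℝ => t⁻¹) ∘ f from rfl,
    fderiv_comp x (differentiableAt_inv h0) hf, fderiv_inv]
  simp [div_eq_mul_inv, mul_comm]

end DirectionalDerivative

def spatialDot (v w : Fin 4 → ℝ) : ℝ :=
  ∑ j : Fin 3, v j.succ * w j.succ

/-- The flat derivative `(D⁰_X V)^γ = X(V^γ)`. -/
def dirDeriv (X V : Pt → Fin 4 → ℝ) (x : Pt) (γ : Fin 4) : ℝ :=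
  vApp X (fun y => V y γ) x

section SpatialCalculus

variable {X V W : Pt → Fin 4 → ℝ} {f : Pt → ℝ} {x : Pt}

lemma vApp_spatialDot_self (hV : ∀ j : Fin 3, DifferentiableAt ℝ (fun y => V y j.succ) x) :
    vApp X (fun y => spatialDot (V y) (V y)) x = 2 * spatialDot (dirDeriv X V x) (V x) := by
  have hsum := fderiv_fun_sum (u := Finset.univ) (A := fun j y => V y j.succ * V y j.succ)
    (x := x) (fun j _ => (hV j).fun_mul (hV j))
  simp only [spatialDot, dirDeriv, vApp_eq_fderiv] at hsum ⊢
  rw [hsum, sum_apply, Finset.mul_sum]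
  refine Finset.sum_congr rfl fun j _ => ?_
  rw [fderiv_fun_mul (hV j) (hV j)]
  simp only [add_apply, smul_apply, smul_eq_mul]
  ring

lemma spatialDot_dirDeriv_of_succ_eq_mul
    (hVW : ∀ (j : Fin 3) (y : Pt), V y j.succ = f y * W y j.succ)
    (hf : DifferentiableAt ℝ f x) (hW : ∀ j : Fin 3, DifferentiableAt ℝ (fun y => W y j.succ) x)
    (z : Fin 4 → ℝ) :
    spatialDot (dirDeriv X V x) z
      = vApp X f x * spatialDot (W x) z + f x * spatialDot (dirDeriv X W x) z := by
  simp only [spatialDot, dirDeriv, Finset.mul_sum, ← Finset.sum_add_distrib]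
  refine Finset.sum_congr rfl fun j _ => ?_
  rw [show (fun y => V y j.succ) = fun y => f y * W y j.succ from funext (hVW j),
    vApp_mul hf (hW j)]
  ring

end SpatialCalculus

section LeviCivita

variable {c : Pt → ℝ} {X V W : Pt → Fin 4 → ℝ} {x : Pt} {α β γ : Fin 4}

lemma gPair_eq_spatialDot (h : V x 0 = 0 ∨ W x 0 = 0) :
    gPair c V W x = spatialDot (V x) (W x) := by
  rcases h with h | h <;> simp [gPair, gMat, spatialDot, Fin.sum_univ_four, Fin.sum_univ_three, h]

lemma pd_gMat_eq_zero (h : β ≠ 0 ∨ γ ≠ 0) : pd (fun y => gMat c β γ y) α x = 0 := by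
  have hconst : (fun y => gMat c β γ y) = fun _ => if β = γ then 1 else 0 := by
    funext y
    rcases h with h | h <;> by_cases hβγ : β = γ <;> simp_all [gMat]
  simp [hconst, pd]

lemma Gamlow_eq_zero (hα : α ≠ 0) (h : β ≠ 0 ∨ γ ≠ 0) : Gamlow c α β γ x = 0 := by
  simp [Gamlow, pd_gMat_eq_zero h, pd_gMat_eq_zero (β := α) (γ := β) (Or.inl hα),
    pd_gMat_eq_zero (β := α) (γ := γ) (Or.inl hα)]

lemma Gam_eq_zero (hα : α ≠ 0) (h : γ ≠ 0 ∨ β ≠ 0) : Gam c γ α β x = 0 := by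
  refine Finset.sum_eq_zero fun l _ => ?_
  by_cases hl : γ = l
  · subst hl
    rw [Gamlow_eq_zero hα h, mul_zero]
  · simp [gInv, hl]

lemma covD_apply_of_spatial (hX : X x 0 = 0) (h : γ ≠ 0 ∨ V x 0 = 0) :
    covD c X V x γ = dirDeriv X V x γ := by
  have hΓ : ∀ α, α ≠ 0 → ∑ β, Gam c γ α β x * V x β = 0 := fun α hα =>
    Finset.sum_eq_zero fun β _ => by
      by_cases hβ : γ ≠ 0 ∨ β ≠ 0
      · rw [Gam_eq_zero hα hβ, zero_mul]
      · obtain ⟨rfl, rfl⟩ : γ = 0 ∧ β = 0 := by simpa using hβ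
        rw [h.resolve_left (by simp), mul_zero]
  simp only [covD, dirDeriv, vApp, mul_add, Finset.sum_add_distrib, add_eq_left]
  refine Finset.sum_eq_zero fun α _ => ?_
  by_cases hα : α = 0
  · rw [hα, hX, zero_mul]
  · rw [hΓ α hα, mul_zero]

lemma gPair_covD_of_spatial (hX : X x 0 = 0) (h : covD c X V x 0 = 0 ∨ W x 0 = 0) :
    gPair c (covD c X V) W x = spatialDot (dirDeriv X V x) (W x) := by
  rw [gPair_eq_spatialDot h]
  exact Finset.sum_congr rfl fun j _ => by
    rw [covD_apply_of_spatial hX (Or.inl j.succ_ne_zero)]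

end LeviCivita

section AcousticFrame

variable {c u : Pt → ℝ} {V : Pt → Fin 4 → ℝ} {y : Pt}

lemma Lvec_zero (hc : c y ≠ 0) (hu : pd u 0 y ≠ 0) : Lvec c u y 0 = 1 := by
  have hLhat : Lhat c u y 0 = ((c y) ^ 2)⁻¹ * pd u 0 y := by
    simp [Lhat, gInv]
  rw [Lvec, hLhat, invDens, inv_mul_cancel₀ (by positivity)]

lemma Lvec_succ (j : Fin 3) : Lvec c u y j.succ = -(invDens c u y * pd u j.succ y) := by
  simp [Lvec, Lhat, gInv, Fin.succ_ne_zero]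

lemma That_succ (j : Fin 3) : That c u y j.succ = -(c y)⁻¹ * Lvec c u y j.succ := by
  simp [That, Fin.succ_ne_zero]

lemma Tvec_zero (hL : Lvec c u y 0 = 1) : Tvec c u y 0 = 0 := by
  simp [Tvec, That, hL]

lemma Tvec_succ (j : Fin 3) :
    Tvec c u y j.succ = -(((c y) ^ 2)⁻¹ * invDens c u y) * Lvec c u y j.succ := by
  rw [Tvec, That_succ]
  ring

lemma Lbar_succ (j : Fin 3) :
    Lbar c u y j.succ = -(((c y) ^ 2)⁻¹ * invDens c u y) * Lvec c u y j.succ := by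
  rw [Lbar, Tvec_succ]
  ring

lemma spatialDot_Lvec_of_zero (hV : V y 0 = 0) :
    spatialDot (Lvec c u y) (V y) = -invDens c u y * vApp V u y := by
  simp only [spatialDot, Lvec_succ, vApp, Fin.sum_univ_succ (n := 3), hV, zero_mul, zero_add,
    Finset.mul_sum]
  exact Finset.sum_congr rfl fun j _ => by ring

lemma spatialDot_Lvec_self (hc : c y ≠ 0) (hu : pd u 0 y ≠ 0)
    (heik : ∑ α, ∑ β, gInv c α β y * pd u α y * pd u β y = 0) :
    spatialDot (Lvec c u y) (Lvec c u y) = c y ^ 2 := by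
  have heik' : -((c y ^ 2)⁻¹ * pd u 0 y * pd u 0 y) + pd u 1 y * pd u 1 y + pd u 2 y * pd u 2 y
      + pd u 3 y * pd u 3 y = 0 := by
    simpa [gInv, Fin.sum_univ_four] using heik
  simp only [spatialDot, Fin.sum_univ_three, Lvec_succ, invDens, Fin.succ_zero_eq_one,
    Fin.succ_one_eq_two, Fin.reduceSucc]
  field_simp
  linear_combination (norm := (field_simp; ring_nf)) (c y ^ 2) * heik'

end AcousticFrame

section Regularity

variable {c u : Pt → ℝ} {x : Pt}

lemma differentiableAt_pd (hu : ContDiffAt ℝ 2 u x) (α : Fin 4) :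
    DifferentiableAt ℝ (pd u α) x :=
  ((hu.fderiv_right (m := 1) (by norm_num)).differentiableAt one_ne_zero).clm_apply
    (differentiableAt_const _)

lemma differentiableAt_invDens (hc : DifferentiableAt ℝ c x) (hu : ContDiffAt ℝ 2 u x)
    (hc0 : c x ≠ 0) (hu0 : pd u 0 x ≠ 0) : DifferentiableAt ℝ (invDens c u) x :=
  (((hc.pow 2).inv (pow_ne_zero 2 hc0)).mul (differentiableAt_pd hu 0)).inv
    (mul_ne_zero (inv_ne_zero (pow_ne_zero 2 hc0)) hu0)

lemma differentiableAt_Lvec_succ (hμ : DifferentiableAt ℝ (invDens c u) x)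
    (hu : ContDiffAt ℝ 2 u x) (j : Fin 3) :
    DifferentiableAt ℝ (fun y => Lvec c u y j.succ) x := by
  simp only [Lvec_succ]
  exact (hμ.mul (differentiableAt_pd hu _)).neg

end Regularity

section SphereForms

variable {c u : Pt → ℝ} {X Y V : Pt → Fin 4 → ℝ} {f : Pt → ℝ} {x : Pt}

lemma gPair_covD_of_succ_eq_mul_Lvec
    (hV : ∀ (j : Fin 3) (y : Pt), V y j.succ = f y * Lvec c u y j.succ)
    (hf : DifferentiableAt ℝ f x)
    (hL : ∀ j : Fin 3, DifferentiableAt ℝ (fun y => Lvec c u y j.succ) x)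
    (hX : X x 0 = 0) (hY : Y x 0 = 0) (hYu : vApp Y u x = 0) :
    gPair c (covD c X V) Y x = f x * gPair c (covD c X (Lvec c u)) Y x := by
  rw [gPair_covD_of_spatial hX (Or.inr hY), gPair_covD_of_spatial hX (Or.inr hY),
    spatialDot_dirDeriv_of_succ_eq_mul hV hf hL, spatialDot_Lvec_of_zero hY, hYu]
  ring

lemma spatialDot_dirDeriv_Lvec_self (hc : DifferentiableAt ℝ c x)
    (hL : ∀ j : Fin 3, DifferentiableAt ℝ (fun y => Lvec c u y j.succ) x)
    (hLL : ∀ᶠ y in 𝓝 x, spatialDot (Lvec c u y) (Lvec c u y) = c y ^ 2) :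
    spatialDot (dirDeriv X (Lvec c u) x) (Lvec c u x) = c x * vApp X c x := by
  have h := vApp_spatialDot_self (X := X) hL
  rw [vApp_congr hLL, show (fun y => c y ^ 2) = fun y => c y * c y by funext; ring,
    vApp_mul hc hc] at h
  linarith

lemma gPair_covD_Lvec_Tvec (hc : DifferentiableAt ℝ c x) (hc0 : c x ≠ 0)
    (hL : ∀ j : Fin 3, DifferentiableAt ℝ (fun y => Lvec c u y j.succ) x)
    (hLL : ∀ᶠ y in 𝓝 x, spatialDot (Lvec c u y) (Lvec c u y) = c y ^ 2)
    (hX : X x 0 = 0) (hT : Tvec c u x 0 = 0) :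
    gPair c (covD c X (Lvec c u)) (Tvec c u) x
      = -((c x)⁻¹ * invDens c u x) * vApp X c x := by
  have hTL : spatialDot (dirDeriv X (Lvec c u) x) (Tvec c u x)
      = -(((c x) ^ 2)⁻¹ * invDens c u x)
          * spatialDot (dirDeriv X (Lvec c u) x) (Lvec c u x) := by
    simp only [spatialDot, Tvec_succ, Finset.mul_sum]
    exact Finset.sum_congr rfl fun j _ => by ring
  rw [gPair_covD_of_spatial hX (Or.inr hT), hTL, spatialDot_dirDeriv_Lvec_self hc hL hLL]
  field_simp

lemma neg_gPair_covD_Tvec_Lvec (hc : DifferentiableAt ℝ c x) (hc0 : c x ≠ 0)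
    (hμ : DifferentiableAt ℝ (invDens c u) x)
    (hL : ∀ j : Fin 3, DifferentiableAt ℝ (fun y => Lvec c u y j.succ) x)
    (hLL : ∀ᶠ y in 𝓝 x, spatialDot (Lvec c u y) (Lvec c u y) = c y ^ 2)
    (hX : X x 0 = 0) (hT : ∀ᶠ y in 𝓝 x, Tvec c u y 0 = 0) :
    -gPair c (covD c X (Tvec c u)) (Lvec c u) x
      = c x * vApp X (fun y => (c y)⁻¹ * invDens c u y) x := by
  have hDT : covD c X (Tvec c u) x 0 = 0 := by
    rw [covD_apply_of_spatial hX (Or.inr hT.self_of_nhds), dirDeriv, vApp_congr hT, vApp_const]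
  have hcinv : DifferentiableAt ℝ (fun y => (c y)⁻¹) x := hc.inv hc0
  have hcμ : DifferentiableAt ℝ (fun y => (c y)⁻¹ * invDens c u y) x := hcinv.mul hμ
  have hsplit : (fun y => -(((c y) ^ 2)⁻¹ * invDens c u y))
      = fun y => -((c y)⁻¹ * ((c y)⁻¹ * invDens c u y)) := by
    funext y
    ring
  have hfD : DifferentiableAt ℝ (fun y => -(((c y) ^ 2)⁻¹ * invDens c u y)) x := by
    rw [hsplit]
    exact (hcinv.mul hcμ).neg
  rw [gPair_covD_of_spatial hX (Or.inl hDT),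
    spatialDot_dirDeriv_of_succ_eq_mul (fun j y => Tvec_succ j) hfD hL, hLL.self_of_nhds,
    spatialDot_dirDeriv_Lvec_self hc hL hLL, hsplit, vApp_neg, vApp_mul hcinv hcμ,
    vApp_inv hc hc0]
  field_simp
  ring

end SphereForms

theorem second_fundamental_forms_and_torsion_general
    (U : Set Pt) (hU : IsOpen U) (c u : Pt → ℝ)
    (hc : ContDiffOn ℝ (⊤ : ℕ∞) c U) (hcpos : ∀ x ∈ U, 0 < c x)
    (hu : ContDiffOn ℝ (⊤ : ℕ∞) u U)
    (heik : ∀ x ∈ U, ∑ α, ∑ β, gInv c α β x * pd u α x * pd u β x = 0)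
    (hut : ∀ x ∈ U, 0 < pd u 0 x)
    (X Y : Pt → Fin 4 → ℝ)
    (hX0 : ∀ x ∈ U, X x 0 = 0)
    (hY0 : ∀ x ∈ U, Y x 0 = 0) (hYu : ∀ x ∈ U, vApp Y u x = 0) :
    ∀ x ∈ U,
      gPair c (covD c X (Lbar c u)) Y x
        = -(((c x) ^ 2)⁻¹ * invDens c u x) * gPair c (covD c X (Lvec c u)) Y x ∧
      gPair c (covD c X (That c u)) Y x
        = -(c x)⁻¹ * gPair c (covD c X (Lvec c u)) Y x ∧
      gPair c (covD c X (Lvec c u)) (Tvec c u) x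
        = -((c x)⁻¹ * invDens c u x) * vApp X c x ∧
      -gPair c (covD c X (Tvec c u)) (Lvec c u) x
        = c x * vApp X (fun y => (c y)⁻¹ * invDens c u y) x := by
  intro x hx
  have hxU : U ∈ 𝓝 x := hU.mem_nhds hx
  have hc0 : ∀ y ∈ U, c y ≠ 0 := fun y hy => (hcpos y hy).ne'
  have hu0 : ∀ y ∈ U, pd u 0 y ≠ 0 := fun y hy => (hut y hy).ne'
  have hcD : DifferentiableAt ℝ c x := (hc.contDiffAt hxU).differentiableAt (by decide)
  have huD : ContDiffAt ℝ 2 u x := (hu.contDiffAt hxU).of_le (WithTop.coe_le_coe.mpr le_top)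
  have hcinvD : DifferentiableAt ℝ (fun y => (c y)⁻¹) x := hcD.inv (hc0 x hx)
  have hμD := differentiableAt_invDens hcD huD (hc0 x hx) (hu0 x hx)
  have hLD := differentiableAt_Lvec_succ hμD huD
  have hT0 : ∀ᶠ y in 𝓝 x, Tvec c u y 0 = 0 :=
    eventually_of_mem hxU fun y hy => Tvec_zero (Lvec_zero (hc0 y hy) (hu0 y hy))
  have hLL : ∀ᶠ y in 𝓝 x, spatialDot (Lvec c u y) (Lvec c u y) = c y ^ 2 :=
    eventually_of_mem hxU fun y hy => spatialDot_Lvec_self (hc0 y hy) (hu0 y hy) (heik y hy)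
  refine ⟨?_, ?_, ?_, ?_⟩
  · exact gPair_covD_of_succ_eq_mul_Lvec (fun j y => Lbar_succ j)
      ((((hcD.pow 2).inv (pow_ne_zero 2 (hc0 x hx))).mul hμD).neg) hLD (hX0 x hx) (hY0 x hx)
      (hYu x hx)
  · exact gPair_covD_of_succ_eq_mul_Lvec (fun j y => That_succ j) hcinvD.neg hLD (hX0 x hx)
      (hY0 x hx) (hYu x hx)
  · exact gPair_covD_Lvec_Tvec hcD (hc0 x hx) hLD hLL (hX0 x hx) hT0.self_of_nhds
  · exact neg_gPair_covD_Tvec_Lvec hcD (hc0 x hx) hμD hLD hLL (hX0 x hx) hT0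

/-- Lemma 2.4: second fundamental forms and torsion one-forms of the spheres S_{t,u}:
χ̄ = −c⁻²μχ, σ = −c⁻¹χ, ζ_X = −c⁻¹μ Xc, η_X = c X(c⁻¹μ). -/
theorem second_fundamental_forms_and_torsion
    (U : Set Pt) (hU : IsOpen U) (c u : Pt → ℝ)
    (hc : ContDiffOn ℝ (⊤ : ℕ∞) c U) (hcpos : ∀ x ∈ U, 0 < c x)
    (hu : ContDiffOn ℝ (⊤ : ℕ∞) u U)
    (heik : ∀ x ∈ U, ∑ α, ∑ β, gInv c α β x * pd u α x * pd u β x = 0)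
    (hut : ∀ x ∈ U, 0 < pd u 0 x)
    (X Y : Pt → Fin 4 → ℝ)
    (hX : ∀ γ : Fin 4, ContDiffOn ℝ (⊤ : ℕ∞) (fun x => X x γ) U)
    (hY : ∀ γ : Fin 4, ContDiffOn ℝ (⊤ : ℕ∞) (fun x => Y x γ) U)
    (hX0 : ∀ x ∈ U, X x 0 = 0) (hXu : ∀ x ∈ U, vApp X u x = 0)
    (hY0 : ∀ x ∈ U, Y x 0 = 0) (hYu : ∀ x ∈ U, vApp Y u x = 0) :
    ∀ x ∈ U,
      gPair c (covD c X (Lbar c u)) Y x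
        = -(((c x) ^ 2)⁻¹ * invDens c u x) * gPair c (covD c X (Lvec c u)) Y x ∧
      gPair c (covD c X (That c u)) Y x
        = -(c x)⁻¹ * gPair c (covD c X (Lvec c u)) Y x ∧
      gPair c (covD c X (Lvec c u)) (Tvec c u) x
        = -((c x)⁻¹ * invDens c u x) * vApp X c x ∧
      -gPair c (covD c X (Tvec c u)) (Lvec c u) x
        = c x * vApp X (fun y => (c y)⁻¹ * invDens c u y) x :=
  second_fundamental_forms_and_torsion_general U hU c u hc hcpos hu heik hut X Y hX0 hY0 hYu
end
end

section
/- Let p ∈ ℕ with p ≥ 1, let U ⊆ ℝ⁴ be open, and let φ : U → ℝ be a smooth function with 1 + (∂_tφ)^p > 0 on U solving the quasilinear wave equation −(1+(∂_tφ)^p)∂_t²φ + Δφ = 0 on U. Set ψ_γ := ∂_γφ for γ = 0,1,2,3 (so ψ₀ = ∂_tφ) and c := (1+ψ₀^p)^{−1/2}, and let g := diag(−c²,1,1,1). Let u : U → ℝ be a smooth optical function (g^{αβ}∂_αu∂_βu = 0, ∂_tu > 0) and define μ := 1/(c^{−2}∂_tu), L̂^α := −g^{αβ}∂_βu, L :=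 μL̂, T̂ := c^{−1}(∂_t − L), T := c^{−1}μT̂, L̄ := c^{−2}μL + 2T, ĝ^{αβ} := g^{αβ} + (2μ)^{−1}(L^αL̄^β + L̄^αL^β), and the covariant wave operator □_gΨ := c^{−1}∂_α(c·g^{αβ}∂_βΨ). Then for each γ ∈ {0,1,2,3}: μ·□_gψ_γ = ½pμψ₀^{p−1}(Lψ₀)(Lψ_γ) + ½pc²ψ₀^{p−1}(Lψ₀)(Tψ_γ) + ½pc²ψ₀^{p−1}(Tψ₀)(Lψ_γ) − ½pc²μψ₀^{p−1}·ĝ^{αβ}∂_αψ₀∂_βψ_γ. -/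
noncomputable section

open scoped BigOperators

/-- The covariant wave operator of g = diag(−c²,1,1,1) in coordinates:
□_gΨ = c⁻¹∂_α(c g^{αβ}∂_βΨ)  (note √|det g| = c). -/
def boxg (c Ψ : Pt → ℝ) (x : Pt) : ℝ :=
  (c x)⁻¹ * ∑ α, pd (fun y => c y * ∑ β, gInv c α β y * pd Ψ β y) α x

/-! Differentiating the wave equation in `x^γ` shows that `ψ_γ` solves
`-s ∂_t²ψ_γ + Δψ_γ = ∂_γ s · ∂_t ψ₀` with `s = 1 + ψ₀^p = c⁻²`. In coordinates, `□_g` is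
`-s ∂_t² + Δ` plus first-order terms in `∂c = -½ c³ ∂s`; since `∂s = p ψ₀^(p-1) ∂ψ₀` and
`∂_γψ₀ = ∂_t ψ_γ`, all first-order terms combine into the null form
`-½ p c² ψ₀^(p-1) g^{αβ} ∂_αψ₀ ∂_βψ_γ`. Finally `ĝ` is built so that
`μ g^{αβ} = μ ĝ^{αβ} - ½ (L^α L̄^β + L̄^α L^β)`, and `L̄ = c⁻²μ L + 2T` splits this null form
into the frame terms. -/

open Filter Topology
open scoped ContDiff

section PartialDerivatives

variable {f g : Pt → ℝ} {x : Pt} {U : Set Pt}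

theorem HasFDerivAt.pd_eq {f' : Pt →L[ℝ] ℝ} (h : HasFDerivAt f f' x) (a : Fin 4) :
    pd f a x = f' (Pi.single a 1) := by
  rw [pd, h.fderiv]

theorem Filter.EventuallyEq.pd_eq (h : f =ᶠ[𝓝 x] g) (a : Fin 4) : pd f a x = pd g a x := by
  rw [pd, pd, h.fderiv_eq]

theorem pd_mul (hf : DifferentiableAt ℝ f x) (hg : DifferentiableAt ℝ g x) (a : Fin 4) :
    pd (fun y => f y * g y) a x = pd f a x * g x + f x * pd g a x := by
  simp only [pd, fderiv_fun_mul hf hg, add_apply,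
    smul_apply, smul_eq_mul]
  ring

theorem pd_sub (hf : DifferentiableAt ℝ f x) (hg : DifferentiableAt ℝ g x) (a : Fin 4) :
    pd (fun y => f y - g y) a x = pd f a x - pd g a x := by
  simp [pd, fderiv_fun_sub hf hg]

theorem pd_sum {ι : Type*} {t : Finset ι} {F : ι → Pt → ℝ}
    (hF : ∀ i ∈ t, DifferentiableAt ℝ (F i) x) (a : Fin 4) :
    pd (fun y => ∑ i ∈ t, F i y) a x = ∑ i ∈ t, pd (F i) a x := by
  simp [pd, fderiv_fun_sum hF]

theorem ContDiffOn.pd_of_isOpen (hU : IsOpen U) (hf : ContDiffOn ℝ ∞ f U) (a : Fin 4) :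
    ContDiffOn ℝ ∞ (pd f a) U :=
  (hf.fderiv_of_isOpen hU (by simp)).clm_apply contDiffOn_const

theorem ContDiffOn.differentiableAt_pd (hU : IsOpen U) (hf : ContDiffOn ℝ ∞ f U) (hx : x ∈ U)
    (a : Fin 4) : DifferentiableAt ℝ (pd f a) x :=
  ((hf.pd_of_isOpen hU a).contDiffAt (hU.mem_nhds hx)).differentiableAt (by simp)

theorem pd_comm (hf : ContDiffAt ℝ 2 f x) (a b : Fin 4) :
    pd (pd f a) b x = pd (pd f b) a x := by
  have hdf : DifferentiableAt ℝ (fderiv ℝ f) x :=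
    (hf.fderiv_right (m := 1) le_rfl).differentiableAt one_ne_zero
  change fderiv ℝ (fun y => fderiv ℝ f y (Pi.single a 1)) x (Pi.single b 1)
    = fderiv ℝ (fun y => fderiv ℝ f y (Pi.single b 1)) x (Pi.single a 1)
  rw [fderiv_clm_apply hdf (differentiableAt_const _),
    fderiv_clm_apply hdf (differentiableAt_const _)]
  simpa using hf.isSymmSndFDerivAt (by simp) (Pi.single b 1) (Pi.single a 1)

theorem pd_pd_pd_comm (hU : IsOpen U) (hf : ContDiffOn ℝ ∞ f U) (hx : x ∈ U) (a b c : Fin 4) :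
    pd (pd (pd f a) b) c x = pd (pd (pd f c) a) b x := by
  have hC2 : ∀ {g : Pt → ℝ}, ContDiffOn ℝ ∞ g U → ∀ y ∈ U, ContDiffAt ℝ 2 g y :=
    fun hg y hy => (hg.contDiffAt (hU.mem_nhds hy)).of_le (WithTop.coe_le_coe.mpr le_top)
  rw [pd_comm (hC2 (hf.pd_of_isOpen hU a) x hx)]
  refine Filter.EventuallyEq.pd_eq ?_ b
  filter_upwards [hU.mem_nhds hx] with y hy using pd_comm (hC2 hf y hy) a c

end PartialDerivatives

def waveOp (s f : Pt → ℝ) (x : Pt) : ℝ :=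
  ∑ i : Fin 3, pd (pd f i.succ) i.succ x - s x * pd (pd f 0) 0 x

section Wave

variable {s f c Ψ : Pt → ℝ} {x : Pt} {U : Set Pt}

theorem waveOp_pd_of_waveOp_eq_zero (hU : IsOpen U) (hf : ContDiffOn ℝ ∞ f U) (hx : x ∈ U)
    (hs : DifferentiableAt ℝ s x) (hwave : ∀ y ∈ U, waveOp s f y = 0) (γ : Fin 4) :
    waveOp s (pd f γ) x = pd s γ x * pd (pd f 0) 0 x := by
  have hd : ∀ a b, DifferentiableAt ℝ (pd (pd f a) b) x :=
    fun a b => (hf.pd_of_isOpen hU a).differentiableAt_pd hU hx b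
  have hderiv : pd (waveOp s f) γ x = 0 := by
    have hzero : waveOp s f =ᶠ[𝓝 x] fun _ => 0 := eventually_of_mem (hU.mem_nhds hx) hwave
    rw [hzero.pd_eq]
    simp [pd]
  unfold waveOp at hderiv
  rw [pd_sub (DifferentiableAt.fun_sum fun i _ => hd _ _) (hs.fun_mul (hd 0 0)),
    pd_sum fun i _ => hd _ _, pd_mul hs (hd 0 0)] at hderiv
  simp only [pd_pd_pd_comm hU hf hx _ _ γ] at hderiv
  rw [waveOp]
  linarith

theorem boxg_eq_waveOp_add (hc : DifferentiableAt ℝ c x) (hc0 : c x ≠ 0)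
    (hΨ : ∀ a, DifferentiableAt ℝ (pd Ψ a) x) :
    boxg c Ψ x = waveOp (fun y => (c y ^ 2)⁻¹) Ψ x
      + (c x)⁻¹ * ((c x ^ 2)⁻¹ * pd c 0 x * pd Ψ 0 x
        + ∑ i : Fin 3, pd c i.succ x * pd Ψ i.succ x) := by
  have htime : (fun y => c y * ∑ β, gInv c 0 β y * pd Ψ β y) = fun y => -(c y)⁻¹ * pd Ψ 0 y := by
    funext y
    rcases eq_or_ne (c y) 0 with h | h
    · simp [h]
    · simp only [gInv, ↓reduceIte, ite_mul, neg_mul, zero_mul, Finset.sum_ite_eq,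
        Finset.mem_univ, mul_neg, neg_inj]
      field_simp
  have hspace : ∀ i : Fin 3,
      (fun y => c y * ∑ β, gInv c i.succ β y * pd Ψ β y) = fun y => c y * pd Ψ i.succ y := by
    intro i
    funext y
    simp [gInv, Fin.succ_ne_zero]
  have hinv : HasFDerivAt (fun y => -(c y)⁻¹) (-(-(c x ^ 2)⁻¹ • fderiv ℝ c x)) x :=
    ((hasDerivAt_inv hc0).comp_hasFDerivAt x hc.hasFDerivAt).neg
  have hinv0 : pd (fun y => -(c y)⁻¹) 0 x = (c x ^ 2)⁻¹ * pd c 0 x := by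
    rw [hinv.pd_eq]
    simp [pd]
  rw [boxg, Fin.sum_univ_succ, htime]
  simp only [hspace]
  rw [pd_mul hinv.differentiableAt (hΨ 0), hinv0]
  simp only [pd_mul hc (hΨ _), waveOp, Finset.sum_add_distrib, Fin.sum_univ_three]
  field_simp
  ring

theorem pd_inv_sqrt (hs : DifferentiableAt ℝ s x) (hsx : 0 < s x) (a : Fin 4) :
    pd (fun y => (√(s y))⁻¹) a x = -((√(s x))⁻¹ ^ 3 / 2) * pd s a x := by
  have hsqrt : √(s x) ≠ 0 := (Real.sqrt_pos.2 hsx).ne'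
  have hderiv : HasFDerivAt (fun y => (√(s y))⁻¹) _ x :=
    (hasDerivAt_inv hsqrt).comp_hasFDerivAt x (hs.hasFDerivAt.sqrt hsx.ne')
  rw [hderiv.pd_eq]
  simp only [pd, one_div, mul_inv_rev, neg_smul, neg_apply,
    smul_apply, smul_eq_mul, inv_pow, neg_mul, neg_inj]
  field_simp

theorem pd_one_add_pow (hf : DifferentiableAt ℝ f x) (p : ℕ) (a : Fin 4) :
    pd (fun y => 1 + f y ^ p) a x = p * f x ^ (p - 1) * pd f a x := by
  have hderiv : HasFDerivAt (fun y => 1 + f y ^ p) _ x :=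
    ((hasDerivAt_pow p (f x)).comp_hasFDerivAt x hf.hasFDerivAt).const_add 1
  rw [hderiv.pd_eq]
  simp [pd]

theorem boxg_pd_of_waveOp_eq_zero (hU : IsOpen U) (hf : ContDiffOn ℝ ∞ f U) (hx : x ∈ U)
    (hs : DifferentiableAt ℝ s x) (hsx : 0 < s x) (hc : ∀ y, c y = (√(s y))⁻¹)
    (hwave : ∀ y ∈ U, waveOp s f y = 0) (γ : Fin 4) :
    boxg c (pd f γ) x = pd s γ x * pd (pd f 0) 0 x
      - (pd s 0 x * pd (pd f γ) 0 x
        + (s x)⁻¹ * ∑ i : Fin 3, pd s i.succ x * pd (pd f γ) i.succ x) / 2 := by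
  obtain rfl : c = fun y => (√(s y))⁻¹ := funext hc
  have hsqrt : 0 < √(s x) := Real.sqrt_pos.2 hsx
  have hc' : DifferentiableAt ℝ (fun y => (√(s y))⁻¹) x :=
    (hs.sqrt hsx.ne').inv hsqrt.ne'
  rw [boxg_eq_waveOp_add hc' (inv_ne_zero hsqrt.ne')
      fun a => (hf.pd_of_isOpen hU γ).differentiableAt_pd hU hx a]
  have hwaveγ := waveOp_pd_of_waveOp_eq_zero hU hf hx hs hwave γ
  simp only [waveOp, inv_pow, inv_inv, Real.sq_sqrt hsx.le, pd_inv_sqrt hs hsx] at hwaveγ ⊢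
  rw [hwaveγ]
  simp only [Fin.sum_univ_three]
  field_simp
  rw [Real.sq_sqrt hsx.le]
  ring

end Wave

theorem boxg_pd_eq_null_form {p : ℕ} {φ c : Pt → ℝ} {x : Pt} {U : Set Pt} (hU : IsOpen U)
    (hφ : ContDiffOn ℝ ∞ φ U) (hx : x ∈ U) (hpos : 0 < 1 + pd φ 0 x ^ p)
    (hc : ∀ y, c y = (√(1 + pd φ 0 y ^ p))⁻¹)
    (hwave : ∀ y ∈ U, waveOp (fun y => 1 + pd φ 0 y ^ p) φ y = 0) (γ : Fin 4) :
    boxg c (pd φ γ) x = -(1 / 2) * p * c x ^ 2 * pd φ 0 x ^ (p - 1)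
      * ∑ α, ∑ β, gInv c α β x * pd (pd φ 0) α x * pd (pd φ γ) β x := by
  have hψ : DifferentiableAt ℝ (pd φ 0) x := hφ.differentiableAt_pd hU hx 0
  have hcomm : pd (pd φ 0) γ x = pd (pd φ γ) 0 x :=
    pd_comm ((hφ.contDiffAt (hU.mem_nhds hx)).of_le (WithTop.coe_le_coe.mpr le_top)) 0 γ
  have hs : DifferentiableAt ℝ (fun y => 1 + pd φ 0 y ^ p) x := by fun_prop
  rw [boxg_pd_of_waveOp_eq_zero hU hφ hx hs hpos hc hwave γ]
  simp only [pd_one_add_pow hψ, hcomm, hc x, inv_pow, inv_inv, Real.sq_sqrt hpos.le, gInv,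
    Fin.sum_univ_four, Fin.sum_univ_three, Fin.reduceSucc, Fin.isValue, Fin.reduceEq, reduceIte]
  field_simp
  ring

section Frame

variable {c u f h : Pt → ℝ} {x : Pt}

theorem invDens_ne_zero (hc : c x ≠ 0) (hu : pd u 0 x ≠ 0) : invDens c u x ≠ 0 := by
  simp [invDens, hc, hu]

theorem vApp_Lbar : vApp (Lbar c u) f x
    = (c x ^ 2)⁻¹ * invDens c u x * vApp (Lvec c u) f x + 2 * vApp (Tvec c u) f x := by
  simp only [vApp, Lbar, add_mul, Finset.sum_add_distrib, Finset.mul_sum, mul_assoc]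

theorem sum_ghat_mul : ∑ α, ∑ β, ghat c u α β x * pd f α x * pd h β x
    = ∑ α, ∑ β, gInv c α β x * pd f α x * pd h β x
      + (2 * invDens c u x)⁻¹ * (vApp (Lvec c u) f x * vApp (Lbar c u) h x
        + vApp (Lbar c u) f x * vApp (Lvec c u) h x) := by
  simp only [ghat, vApp, Fin.sum_univ_four]
  ring

end Frame

theorem covariant_wave_equations_for_derivatives_general
    (p : ℕ) (U : Set Pt) (hU : IsOpen U) (φ : Pt → ℝ)
    (hφ : ContDiffOn ℝ (⊤ : ℕ∞) φ U)
    (hpos : ∀ x ∈ U, 0 < 1 + (pd φ 0 x) ^ p)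
    (heq : ∀ x ∈ U,
      -(1 + (pd φ 0 x) ^ p) * pd (fun y => pd φ 0 y) 0 x
        + ∑ i : Fin 3, pd (fun y => pd φ i.succ y) i.succ x = 0)
    (c : Pt → ℝ) (hcdef : ∀ x, c x = (Real.sqrt (1 + (pd φ 0 x) ^ p))⁻¹)
    (u : Pt → ℝ)
    (hut : ∀ x ∈ U, 0 < pd u 0 x) :
    ∀ x ∈ U, ∀ γ : Fin 4,
      invDens c u x * boxg c (pd φ γ) x
        = (1 / 2) * p * invDens c u x * (pd φ 0 x) ^ (p - 1)
            * vApp (Lvec c u) (pd φ 0) x * vApp (Lvec c u) (pd φ γ) x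
          + (1 / 2) * p * (c x) ^ 2 * (pd φ 0 x) ^ (p - 1)
            * vApp (Lvec c u) (pd φ 0) x * vApp (Tvec c u) (pd φ γ) x
          + (1 / 2) * p * (c x) ^ 2 * (pd φ 0 x) ^ (p - 1)
            * vApp (Tvec c u) (pd φ 0) x * vApp (Lvec c u) (pd φ γ) x
          - (1 / 2) * p * (c x) ^ 2 * invDens c u x * (pd φ 0 x) ^ (p - 1)
            * ∑ α, ∑ β, ghat c u α β x * pd (pd φ 0) α x * pd (pd φ γ) β x := by
  intro x hx γ
  have hwave : ∀ y ∈ U, waveOp (fun y => 1 + pd φ 0 y ^ p) φ y = 0 := fun y hy => by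
    rw [waveOp]
    linarith [heq y hy]
  have hc : c x ≠ 0 := by
    rw [hcdef]
    exact inv_ne_zero (Real.sqrt_pos.2 (hpos x hx)).ne'
  have hμ : invDens c u x ≠ 0 := invDens_ne_zero hc (hut x hx).ne'
  rw [boxg_pd_eq_null_form hU hφ hx (hpos x hx) hcdef hwave γ, sum_ghat_mul, vApp_Lbar,
    vApp_Lbar]
  field_simp
  ring

/-- Equations (2.31)–(2.32): the derived covariant wave equations μ□_gψ_γ = F_γ
for the first derivatives ψ_γ = ∂_γφ of a solution φ of
−(1+(∂_tφ)^p)∂_t²φ + Δφ = 0. -/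
theorem covariant_wave_equations_for_derivatives
    (p : ℕ) (hp : 1 ≤ p) (U : Set Pt) (hU : IsOpen U) (φ : Pt → ℝ)
    (hφ : ContDiffOn ℝ (⊤ : ℕ∞) φ U)
    (hpos : ∀ x ∈ U, 0 < 1 + (pd φ 0 x) ^ p)
    (heq : ∀ x ∈ U,
      -(1 + (pd φ 0 x) ^ p) * pd (fun y => pd φ 0 y) 0 x
        + ∑ i : Fin 3, pd (fun y => pd φ i.succ y) i.succ x = 0)
    (c : Pt → ℝ) (hcdef : ∀ x, c x = (Real.sqrt (1 + (pd φ 0 x) ^ p))⁻¹)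
    (u : Pt → ℝ) (hu : ContDiffOn ℝ (⊤ : ℕ∞) u U)
    (heik : ∀ x ∈ U, ∑ α, ∑ β, gInv c α β x * pd u α x * pd u β x = 0)
    (hut : ∀ x ∈ U, 0 < pd u 0 x) :
    ∀ x ∈ U, ∀ γ : Fin 4,
      invDens c u x * boxg c (pd φ γ) x
        = (1 / 2) * p * invDens c u x * (pd φ 0 x) ^ (p - 1)
            * vApp (Lvec c u) (pd φ 0) x * vApp (Lvec c u) (pd φ γ) x
          + (1 / 2) * p * (c x) ^ 2 * (pd φ 0 x) ^ (p - 1)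
            * vApp (Lvec c u) (pd φ 0) x * vApp (Tvec c u) (pd φ γ) x
          + (1 / 2) * p * (c x) ^ 2 * (pd φ 0 x) ^ (p - 1)
            * vApp (Tvec c u) (pd φ 0) x * vApp (Lvec c u) (pd φ γ) x
          - (1 / 2) * p * (c x) ^ 2 * invDens c u x * (pd φ 0 x) ^ (p - 1)
            * ∑ α, ∑ β, ghat c u α β x * pd (pd φ 0) α x * pd (pd φ γ) β x :=
  covariant_wave_equations_for_derivatives_general p U hU φ hφ hpos heq c hcdef u hut
end
end

section
/- Let a > 1 and C₀ > 0, let K be a nonempty compact topological space, let 1 ≤ T, and let μ : [1,T] × K → ℝ be continuous with 0 < μ(t,y) ≤ C₀ for all (t,y). Assume that for each y ∈ K the function t ↦ μ(t,y) is differentiable and that ∂_tμ(t,y) < 0 whenever μ(t,y) ≤ 1 − 1/a. Define μ_min(t) := min_{y∈K} μ(t,y). Then for all 1 ≤ t' ≤ t ≤ T: μ_min(t')^{−1} ≤ max{1, (1−1/a)^{−1}·C₀}·μ_min(t)^{−1}; in particular μ_min(t')^{−a} ≤ (max{1, (1−1/a)^{−1}C₀})^{a}·μ_min(t)^{−a}.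 -/
/-!
Let `c = 1 - 1/a`. If `μ_min(t') < c`, follow the point `y` where `μ(t', ·)` attains its minimum:
`μ(·, y)` can never rise above the level `μ_min(t') < c`, because at that level its time
derivative is negative. Hence `μ_min(t) ≤ μ(t, y) ≤ μ_min(t')`. Otherwise `μ_min(t') ≥ c`, and
`μ_min(t) ≤ C₀` bounds `μ_min(t')⁻¹ ≤ c⁻¹` by `c⁻¹ C₀ μ_min(t)⁻¹`.
-/

open Set

lemma le_of_deriv_neg_at_level {f : ℝ → ℝ} {a b c : ℝ} (hf : ContinuousOn f (Icc a b))
    (hdiff : ∀ x ∈ Ico a b, DifferentiableAt ℝ f x)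
    (hneg : ∀ x ∈ Ico a b, f x = c → deriv f x < 0) (ha : f a ≤ c) :
    ∀ x ∈ Icc a b, f x ≤ c :=
  image_le_of_deriv_right_lt_deriv_boundary' hf
    (fun x hx => (hdiff x hx).hasDerivAt.hasDerivWithinAt) ha continuousOn_const
    (fun _ _ => hasDerivWithinAt_const _ _ _) hneg

lemma exists_eq_ciInf_of_continuous {K : Type*} [TopologicalSpace K] [CompactSpace K]
    [Nonempty K] {f : K → ℝ} (hf : Continuous f) : ∃ y, ⨅ x, f x = f y :=
  let ⟨y, hy⟩ := (isCompact_range hf).sInf_mem (range_nonempty f)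
  ⟨y, hy.symm⟩

lemma inv_le_max_mul_inv {m m' c C : ℝ} (hc : 0 < c) (hm : 0 < m) (hmC : m ≤ C)
    (h : m ≤ m' ∨ c ≤ m') : m'⁻¹ ≤ max 1 (c⁻¹ * C) * m⁻¹ := by
  rcases h with hmm' | hcm'
  · calc m'⁻¹ ≤ m⁻¹ := inv_anti₀ hm hmm'
      _ ≤ max 1 (c⁻¹ * C) * m⁻¹ := le_mul_of_one_le_left (by positivity) (le_max_left _ _)
  · have hCm : 1 ≤ C * m⁻¹ := by rw [← mul_inv_cancel₀ hm.ne']; gcongr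
    calc m'⁻¹ ≤ c⁻¹ := inv_anti₀ hc hcm'
      _ ≤ c⁻¹ * (C * m⁻¹) := le_mul_of_one_le_right (by positivity) hCm
      _ ≤ max 1 (c⁻¹ * C) * m⁻¹ := by rw [← mul_assoc]; gcongr; exact le_max_right _ _

lemma ciInf_le_ciInf_of_ciInf_lt {K : Type*} [TopologicalSpace K] [CompactSpace K] [Nonempty K]
    {μ : ℝ → K → ℝ} {c t' t : ℝ} (ht't : t' ≤ t) (hcont' : Continuous (μ t'))
    (hbdd : BddBelow (range (μ t))) (hcont : ∀ y, ContinuousOn (fun s => μ s y) (Icc t' t))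
    (hdiff : ∀ y, ∀ s ∈ Icc t' t, DifferentiableAt ℝ (fun s => μ s y) s)
    (hderiv : ∀ y, ∀ s ∈ Icc t' t, μ s y ≤ c → deriv (fun s => μ s y) s < 0)
    (hlt : ⨅ y, μ t' y < c) : ⨅ y, μ t y ≤ ⨅ y, μ t' y := by
  obtain ⟨y, hy⟩ := exists_eq_ciInf_of_continuous hcont'
  have hbarrier := le_of_deriv_neg_at_level (hcont y)
    (fun s hs => hdiff y s (Ico_subset_Icc_self hs))
    (fun s hs hsy => hderiv y s (Ico_subset_Icc_self hs) (hsy.trans_lt hlt).le) hy.ge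
  exact (ciInf_le hbdd y).trans (hbarrier t ⟨ht't, le_rfl⟩)

theorem monotonicity_of_mu_min_general
    (a C₀ : ℝ) (ha : 1 < a)
    (K : Type*) [TopologicalSpace K] [CompactSpace K] [Nonempty K]
    (T : ℝ) (μ : ℝ → K → ℝ)
    (hcont : ContinuousOn (fun q : ℝ × K => μ q.1 q.2) (Set.Icc 1 T ×ˢ Set.univ))
    (hbdd : ∀ t ∈ Set.Icc (1 : ℝ) T, ∀ y : K, 0 < μ t y ∧ μ t y ≤ C₀)
    (hdiff : ∀ y : K, ∀ t ∈ Set.Icc (1 : ℝ) T, DifferentiableAt ℝ (fun s => μ s y) t)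
    (hderiv : ∀ t ∈ Set.Icc (1 : ℝ) T, ∀ y : K,
      μ t y ≤ 1 - 1 / a → deriv (fun s => μ s y) t < 0) :
    ∀ t' t : ℝ, 1 ≤ t' → t' ≤ t → t ≤ T →
      (⨅ y : K, μ t' y)⁻¹ ≤ max 1 ((1 - 1 / a)⁻¹ * C₀) * (⨅ y : K, μ t y)⁻¹ ∧
      ((⨅ y : K, μ t' y)⁻¹) ^ a
        ≤ (max 1 ((1 - 1 / a)⁻¹ * C₀)) ^ a * ((⨅ y : K, μ t y)⁻¹) ^ a := by
  intro t' t ht' ht't htT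
  have hsub : Icc t' t ⊆ Icc 1 T := Icc_subset_Icc ht' htT
  have ht'_mem : t' ∈ Icc 1 T := hsub ⟨le_rfl, ht't⟩
  have ht_mem : t ∈ Icc 1 T := hsub ⟨ht't, le_rfl⟩
  have hslice : ∀ s ∈ Icc 1 T, Continuous (μ s) := fun s hs =>
    hcont.comp_continuous (continuous_const.prodMk continuous_id) fun y => ⟨hs, trivial⟩
  have hc : 0 < 1 - 1 / a := by rw [sub_pos, div_lt_one (by linarith)]; exact ha
  obtain ⟨y, hy⟩ := exists_eq_ciInf_of_continuous (hslice t ht_mem)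
  obtain ⟨y', hy'⟩ := exists_eq_ciInf_of_continuous (hslice t' ht'_mem)
  have hmin_pos : 0 < ⨅ y, μ t y := hy ▸ (hbdd t ht_mem y).1
  have hmin_pos' : 0 < ⨅ y, μ t' y := hy' ▸ (hbdd t' ht'_mem y').1
  have hmono : ⨅ y, μ t' y < 1 - 1 / a → ⨅ y, μ t y ≤ ⨅ y, μ t' y :=
    ciInf_le_ciInf_of_ciInf_lt ht't (hslice t' ht'_mem) (isCompact_range (hslice t ht_mem)).bddBelow
      (fun y => (hcont.comp (continuous_id.prodMk continuous_const).continuousOn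
        fun s hs => ⟨hs, trivial⟩).mono hsub)
      (fun y s hs => hdiff y s (hsub hs)) (fun y s hs => hderiv s (hsub hs) y)
  have hinv := inv_le_max_mul_inv hc hmin_pos (hy ▸ (hbdd t ht_mem y).2)
    ((lt_or_ge _ _).imp hmono id)
  refine ⟨hinv, ?_⟩
  rw [← Real.mul_rpow (by positivity) (by positivity)]
  exact Real.rpow_le_rpow (by positivity) hinv (by linarith)

/-- Lemma 6.3(2), monotonicity: if μ is positive, bounded by C₀, and strictly decreasing
in time wherever it is ≤ 1 − 1/a, then μ_min(t')⁻¹ ≤ max{1,(1−1/a)⁻¹C₀}·μ_min(t)⁻¹ for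
t' ≤ t; in particular μ_min(t')^{−a} ≤ (max{1,(1−1/a)⁻¹C₀})^a·μ_min(t)^{−a}. -/
theorem monotonicity_of_mu_min
    (a C₀ : ℝ) (ha : 1 < a) (hC₀ : 0 < C₀)
    (K : Type*) [TopologicalSpace K] [CompactSpace K] [Nonempty K]
    (T : ℝ) (hT : 1 ≤ T) (μ : ℝ → K → ℝ)
    (hcont : ContinuousOn (fun q : ℝ × K => μ q.1 q.2) (Set.Icc 1 T ×ˢ Set.univ))
    (hbdd : ∀ t ∈ Set.Icc (1 : ℝ) T, ∀ y : K, 0 < μ t y ∧ μ t y ≤ C₀)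
    (hdiff : ∀ y : K, ∀ t ∈ Set.Icc (1 : ℝ) T, DifferentiableAt ℝ (fun s => μ s y) t)
    (hderiv : ∀ t ∈ Set.Icc (1 : ℝ) T, ∀ y : K,
      μ t y ≤ 1 - 1 / a → deriv (fun s => μ s y) t < 0) :
    ∀ t' t : ℝ, 1 ≤ t' → t' ≤ t → t ≤ T →
      (⨅ y : K, μ t' y)⁻¹ ≤ max 1 ((1 - 1 / a)⁻¹ * C₀) * (⨅ y : K, μ t y)⁻¹ ∧
      ((⨅ y : K, μ t' y)⁻¹) ^ a
        ≤ (max 1 ((1 - 1 / a)⁻¹ * C₀)) ^ a * ((⨅ y : K, μ t y)⁻¹) ^ a :=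
  monotonicity_of_mu_min_general a C₀ ha K T μ hcont hbdd hdiff hderiv
end
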